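/- arXiv:1802.02959 — 2 statements merged into one kernel-verified Lean document; each statement's English description precedes it below -/
import Mathlib

section
/- Let f : ℝ² → ℝ be smooth and analytically flat at the origin. Then for any positive even integers p, q with p ≥ q, writing f = Σ_{i+j=2p} f_{ij} x^i y^j with each f_{ij} smooth and flat at 0 (Taylor's theorem with flat remainders), the function f(x,y)/(x^p + y^q + g(x,y)) tends to 0 as (x,y) → (0,0), for any smooth nonnegative g. -/
/-- if a smooth flat `f` is written (Taylor with flat remainders) as
`f = Σ_{i+j=2p} f_{ij} x^i y^j` with each `f_{ij}` smooth and flat at `0`, then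
`f/(x^p + y^q + g)` tends to `0` at the origin, for any smooth nonnegative `g` and
positive even `p ≥ q`. -/
theorem stmt1 (f g : ℝ × ℝ → ℝ) (p q : ℕ) (F : ℕ × ℕ → ℝ × ℝ → ℝ)
    (hf : ContDiff ℝ (⊤ : ℕ∞) f)
    (hflat : ∀ n, iteratedFDeriv ℝ n f (0 : ℝ × ℝ) = 0)
    (hg : ContDiff ℝ (⊤ : ℕ∞) g) (hg0 : ∀ z, 0 ≤ g z)
    (hp : 0 < p) (hq : 0 < q) (hpe : Even p) (hqe : Even q) (hpq : q ≤ p)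
    (hFsmooth : ∀ ij ∈ Finset.HasAntidiagonal.antidiagonal (2 * p), ContDiff ℝ (⊤ : ℕ∞) (F ij))
    (hFflat : ∀ ij ∈ Finset.HasAntidiagonal.antidiagonal (2 * p),
      ∀ n, iteratedFDeriv ℝ n (F ij) (0 : ℝ × ℝ) = 0)
    (hdecomp : ∀ z : ℝ × ℝ,
      f z = ∑ ij ∈ Finset.HasAntidiagonal.antidiagonal (2 * p), F ij z * z.1 ^ ij.1 * z.2 ^ ij.2) :
    Filter.Tendsto (fun z : ℝ × ℝ => f z / (z.1 ^ p + z.2 ^ q + g z))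
      (nhds (0 : ℝ × ℝ)) (nhds (0 : ℝ)) := by
  set D : ℝ × ℝ → ℝ := fun z => z.1 ^ p + z.2 ^ q + g z with hD
  set A : ℝ × ℝ → ℝ := fun z =>
    (∑ ij ∈ Finset.HasAntidiagonal.antidiagonal (2 * p), |F ij z|) * (z.1 ^ p + z.2 ^ q) with hA
  have hxp : ∀ x : ℝ, 0 ≤ x ^ p := fun x => hpe.pow_nonneg x
  have hyq : ∀ y : ℝ, 0 ≤ y ^ q := fun y => hqe.pow_nonneg y
  have hSnn : ∀ z : ℝ × ℝ, 0 ≤ z.1 ^ p + z.2 ^ q := fun z =>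
    add_nonneg (hxp z.1) (hyq z.2)
  have hAnn : ∀ z, 0 ≤ A z := fun z =>
    mul_nonneg (Finset.sum_nonneg fun ij _ => abs_nonneg _) (hSnn z)
  have hSD : ∀ z, z.1 ^ p + z.2 ^ q ≤ D z := fun z => le_add_of_nonneg_right (hg0 z)
  -- key monomial bound
  have key : ∀ z : ℝ × ℝ, |z.2| ≤ 1 → ∀ ij ∈ Finset.HasAntidiagonal.antidiagonal (2 * p),
      |z.1 ^ ij.1 * z.2 ^ ij.2| ≤ (z.1 ^ p + z.2 ^ q) ^ 2 := by
    rintro ⟨x, y⟩ hy ⟨i, j⟩ hij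
    simp only [Finset.HasAntidiagonal.mem_antidiagonal] at hij
    have habs : |x ^ i * y ^ j| = |x| ^ i * |y| ^ j := by
      rw [abs_mul, abs_pow, abs_pow]
    rw [habs]
    rcases le_total |x| |y| with h | h
    · have h1 : |x| ^ i * |y| ^ j ≤ |y| ^ (2 * p) := by
        calc |x| ^ i * |y| ^ j ≤ |y| ^ i * |y| ^ j :=
              mul_le_mul_of_nonneg_right (pow_le_pow_left₀ (abs_nonneg x) h i)
                (pow_nonneg (abs_nonneg y) j)
        _ = |y| ^ (i + j) := (pow_add |y| i j).symm
        _ = |y| ^ (2 * p) := by rw [hij]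
      have h2 : |y| ^ (2 * p) ≤ |y| ^ (2 * q) :=
        pow_le_pow_of_le_one (abs_nonneg y) hy (by omega)
      have h3 : |y| ^ (2 * q) = (y ^ q) ^ 2 := by
        rw [show 2 * q = q * 2 by ring, pow_mul, hqe.pow_abs]
      have h4 : (y ^ q) ^ 2 ≤ (x ^ p + y ^ q) ^ 2 :=
        pow_le_pow_left₀ (hyq y) (le_add_of_nonneg_left (hxp x)) 2
      calc |x| ^ i * |y| ^ j ≤ |y| ^ (2 * p) := h1
        _ ≤ |y| ^ (2 * q) := h2
        _ = (y ^ q) ^ 2 := h3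
        _ ≤ (x ^ p + y ^ q) ^ 2 := h4
    · have h1 : |x| ^ i * |y| ^ j ≤ |x| ^ (2 * p) := by
        calc |x| ^ i * |y| ^ j ≤ |x| ^ i * |x| ^ j :=
              mul_le_mul_of_nonneg_left (pow_le_pow_left₀ (abs_nonneg y) h j)
                (pow_nonneg (abs_nonneg x) i)
        _ = |x| ^ (i + j) := (pow_add |x| i j).symm
        _ = |x| ^ (2 * p) := by rw [hij]
      have h3 : |x| ^ (2 * p) = (x ^ p) ^ 2 := by
        rw [show 2 * p = p * 2 by ring, pow_mul, hpe.pow_abs]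
      have h4 : (x ^ p) ^ 2 ≤ (x ^ p + y ^ q) ^ 2 :=
        pow_le_pow_left₀ (hxp x) (le_add_of_nonneg_right (hyq y)) 2
      calc |x| ^ i * |y| ^ j ≤ |x| ^ (2 * p) := h1
        _ = (x ^ p) ^ 2 := h3
        _ ≤ (x ^ p + y ^ q) ^ 2 := h4
  -- the bound |f z / D z| ≤ A z when |z.2| ≤ 1
  have hbound : ∀ z : ℝ × ℝ, |z.2| ≤ 1 → ‖f z / D z‖ ≤ A z := by
    intro z hz
    rw [Real.norm_eq_abs]
    by_cases hDz : D z = 0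
    · rw [hDz, div_zero, abs_zero]; exact hAnn z
    · have hDnn : 0 ≤ D z := add_nonneg (hSnn z) (hg0 z)
      have hDpos : 0 < D z := lt_of_le_of_ne hDnn (Ne.symm hDz)
      rw [abs_div, abs_of_pos hDpos, div_le_iff₀ hDpos]
      have h1 : |f z| ≤ ∑ ij ∈ Finset.HasAntidiagonal.antidiagonal (2 * p),
          |F ij z| * (z.1 ^ p + z.2 ^ q) ^ 2 := by
        rw [hdecomp z]
        refine (Finset.abs_sum_le_sum_abs _ _).trans (Finset.sum_le_sum ?_)
        intro ij hij
        rw [mul_assoc, abs_mul]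
        exact mul_le_mul_of_nonneg_left (key z hz ij hij) (abs_nonneg _)
      have h2 : (z.1 ^ p + z.2 ^ q) ^ 2 ≤ (z.1 ^ p + z.2 ^ q) * D z := by
        rw [sq]
        exact mul_le_mul_of_nonneg_left (hSD z) (hSnn z)
      calc |f z| ≤ ∑ ij ∈ Finset.HasAntidiagonal.antidiagonal (2 * p),
            |F ij z| * (z.1 ^ p + z.2 ^ q) ^ 2 := h1
        _ ≤ ∑ ij ∈ Finset.HasAntidiagonal.antidiagonal (2 * p),
            |F ij z| * ((z.1 ^ p + z.2 ^ q) * D z) := by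
            refine Finset.sum_le_sum fun ij _ => ?_
            exact mul_le_mul_of_nonneg_left h2 (abs_nonneg _)
        _ = A z * D z := by
            simp only [hA, Finset.sum_mul, mul_assoc]
  -- A tends to 0
  have hAcont : Continuous A := by
    apply Continuous.mul
    · exact continuous_finset_sum _ fun ij hij =>
        ((hFsmooth ij hij).continuous).abs
    · exact ((continuous_fst.pow p).add (continuous_snd.pow q))
  have hA0 : A 0 = 0 := by
    simp [hA, zero_pow hp.ne', zero_pow hq.ne']
  have hAtendsto : Filter.Tendsto A (nhds (0 : ℝ × ℝ)) (nhds (0 : ℝ)) := by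
    have := hAcont.tendsto (0 : ℝ × ℝ)
    rwa [hA0] at this
  -- eventually |z.2| ≤ 1
  have hev : ∀ᶠ z : ℝ × ℝ in nhds 0, ‖f z / D z‖ ≤ A z := by
    have h2 : Filter.Tendsto (fun z : ℝ × ℝ => |z.2|) (nhds 0) (nhds 0) := by
      have := (continuous_snd.abs).tendsto (0 : ℝ × ℝ)
      simpa using this
    filter_upwards [h2.eventually_le_const (by norm_num : (0:ℝ) < 1)] with z hz
    exact hbound z hz
  exact squeeze_zero_norm' hev hAtendsto
end

section
/- Let f : [-1,1]² → ℝ be smooth. Then the limit as ε → 0⁺ of the double integral of f(x,y)/(xy) over {(x,y) ∈ [-1,1]² : |x| ≥ ε, |y| ≥ ε} exists and is finite. -/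
open MeasureTheory


private def sqr : Set (ℝ × ℝ) := Set.Icc ((-1, -1) : ℝ × ℝ) ((1, 1) : ℝ × ℝ)
private def SS (ε : ℝ) : Set (ℝ × ℝ) := {z : ℝ × ℝ | z ∈ sqr ∧ ε ≤ |z.1| ∧ ε ≤ |z.2|}
private noncomputable def Df (f : ℝ × ℝ → ℝ) (z : ℝ × ℝ) : ℝ :=
  f z - f (-z.1, z.2) - f (z.1, -z.2) + f (-z.1, -z.2)
private noncomputable def hfun (f : ℝ × ℝ → ℝ) (z : ℝ × ℝ) : ℝ := Df f z / (4 * (z.1 * z.2))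

private lemma SS_eq (ε : ℝ) : SS ε =
    sqr ∩ ({z : ℝ × ℝ | ε ≤ |z.1|} ∩ {z : ℝ × ℝ | ε ≤ |z.2|}) := rfl

private lemma SS_meas (ε : ℝ) : MeasurableSet (SS ε) := by
  rw [SS_eq]
  exact measurableSet_Icc.inter
    ((measurableSet_le measurable_const measurable_fst.abs).inter
      (measurableSet_le measurable_const measurable_snd.abs))

private lemma SS_compact (ε : ℝ) : IsCompact (SS ε) := by
  have hcl : IsClosed (SS ε) := by
    rw [SS_eq]
    exact isClosed_Icc.inter
      ((isClosed_le continuous_const continuous_fst.abs).inter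
        (isClosed_le continuous_const continuous_snd.abs))
  exact IsCompact.of_isClosed_subset isCompact_Icc hcl (fun z hz => hz.1)

private lemma refl_fst (g : ℝ × ℝ → ℝ) (S : Set (ℝ × ℝ))
    (hS : (fun z : ℝ × ℝ => ((-z.1, z.2) : ℝ × ℝ)) ⁻¹' S = S) :
    ∫ z in S, g (-z.1, z.2) = ∫ z in S, g z := by
  have h := (Measure.measurePreserving_neg (volume : Measure ℝ)).prod
    (MeasurePreserving.id (volume : Measure ℝ))
  rw [← Measure.volume_eq_prod] at h
  have hemb : MeasurableEmbedding (fun z : ℝ × ℝ => ((-z.1, z.2) : ℝ × ℝ)) :=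
    ((MeasurableEquiv.neg ℝ).prodCongr (MeasurableEquiv.refl ℝ)).measurableEmbedding
  have key : ∫ z in (fun z : ℝ × ℝ => ((-z.1, z.2) : ℝ × ℝ)) ⁻¹' S, g (-z.1, z.2) =
      ∫ z in S, g z := MeasurePreserving.setIntegral_preimage_emb h hemb g S
  rwa [hS] at key

private lemma refl_snd (g : ℝ × ℝ → ℝ) (S : Set (ℝ × ℝ))
    (hS : (fun z : ℝ × ℝ => ((z.1, -z.2) : ℝ × ℝ)) ⁻¹' S = S) :
    ∫ z in S, g (z.1, -z.2) = ∫ z in S, g z := by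
  have h := (MeasurePreserving.id (volume : Measure ℝ)).prod
    (Measure.measurePreserving_neg (volume : Measure ℝ))
  rw [← Measure.volume_eq_prod] at h
  have hemb : MeasurableEmbedding (fun z : ℝ × ℝ => ((z.1, -z.2) : ℝ × ℝ)) :=
    ((MeasurableEquiv.refl ℝ).prodCongr (MeasurableEquiv.neg ℝ)).measurableEmbedding
  have key : ∫ z in (fun z : ℝ × ℝ => ((z.1, -z.2) : ℝ × ℝ)) ⁻¹' S, g (z.1, -z.2) =
      ∫ z in S, g z := MeasurePreserving.setIntegral_preimage_emb h hemb g S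
  rwa [hS] at key

private lemma SS_refl_fst (ε : ℝ) :
    (fun z : ℝ × ℝ => ((-z.1, z.2) : ℝ × ℝ)) ⁻¹' (SS ε) = SS ε := by
  ext ⟨x, y⟩
  simp only [Set.mem_preimage, SS, Set.mem_setOf_eq, sqr, Set.mem_Icc, Prod.le_def, abs_neg]
  constructor <;> rintro ⟨⟨⟨a1, a2⟩, ⟨b1, b2⟩⟩, c, d⟩ <;>
    exact ⟨⟨⟨by linarith, a2⟩, ⟨by linarith, b2⟩⟩, c, d⟩

private lemma SS_refl_snd (ε : ℝ) :
    (fun z : ℝ × ℝ => ((z.1, -z.2) : ℝ × ℝ)) ⁻¹' (SS ε) = SS ε := by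
  ext ⟨x, y⟩
  simp only [Set.mem_preimage, SS, Set.mem_setOf_eq, sqr, Set.mem_Icc, Prod.le_def, abs_neg]
  constructor <;> rintro ⟨⟨⟨a1, a2⟩, ⟨b1, b2⟩⟩, c, d⟩ <;>
    exact ⟨⟨⟨a1, by linarith⟩, ⟨b1, by linarith⟩⟩, c, d⟩

private lemma key_eq (f : ℝ × ℝ → ℝ) (hf : ContDiff ℝ (⊤ : ℕ∞) f) {ε : ℝ} (hε : 0 < ε) :
    ∫ z in SS ε, hfun f z = ∫ z in SS ε, f z / (z.1 * z.2) := by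
  have hne : ∀ z ∈ SS ε, z.1 ≠ 0 ∧ z.2 ≠ 0 := by
    rintro z ⟨_, h1, h2⟩
    refine ⟨fun h0 => ?_, fun h0 => ?_⟩
    · rw [h0] at h1; simp at h1; linarith
    · rw [h0] at h2; simp at h2; linarith
  have hcden : ContinuousOn (fun z : ℝ × ℝ => z.1 * z.2) (SS ε) :=
    (continuous_fst.mul continuous_snd).continuousOn
  have hden_ne : ∀ z ∈ SS ε, z.1 * z.2 ≠ 0 := fun z hz =>
    mul_ne_zero (hne z hz).1 (hne z hz).2
  have hInt : ∀ g : ℝ × ℝ → ℝ, Continuous g →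
      IntegrableOn (fun z : ℝ × ℝ => g z / (z.1 * z.2)) (SS ε) := by
    intro g hg
    exact ContinuousOn.integrableOn_compact (SS_compact ε)
      (hg.continuousOn.div hcden hden_ne)
  have hfc : Continuous f := hf.continuous
  have hIa : IntegrableOn (fun z : ℝ × ℝ => f z / (z.1 * z.2)) (SS ε) volume := hInt f hfc
  have hIb : IntegrableOn (fun z : ℝ × ℝ => f (-z.1, z.2) / (z.1 * z.2)) (SS ε) volume :=
    hInt (fun z => f (-z.1, z.2)) (hfc.comp (continuous_fst.neg.prodMk continuous_snd))
  have hIc : IntegrableOn (fun z : ℝ × ℝ => f (z.1, -z.2) / (z.1 * z.2)) (SS ε) volume :=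
    hInt (fun z => f (z.1, -z.2)) (hfc.comp (continuous_fst.prodMk continuous_snd.neg))
  have hId : IntegrableOn (fun z : ℝ × ℝ => f (-z.1, -z.2) / (z.1 * z.2)) (SS ε) volume :=
    hInt (fun z => f (-z.1, -z.2)) (hfc.comp (continuous_fst.neg.prodMk continuous_snd.neg))
  have hb : ∫ z in SS ε, f (-z.1, z.2) / (z.1 * z.2) = -∫ z in SS ε, f z / (z.1 * z.2) := by
    have h2 := refl_fst (fun w : ℝ × ℝ => f w / -(w.1 * w.2)) (SS ε) (SS_refl_fst ε)
    simp only [neg_mul, neg_neg, div_neg] at h2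
    rw [integral_neg] at h2
    exact h2
  have hc : ∫ z in SS ε, f (z.1, -z.2) / (z.1 * z.2) = -∫ z in SS ε, f z / (z.1 * z.2) := by
    have h2 := refl_snd (fun w : ℝ × ℝ => f w / -(w.1 * w.2)) (SS ε) (SS_refl_snd ε)
    simp only [mul_neg, neg_neg, div_neg] at h2
    rw [integral_neg] at h2
    exact h2
  have hd : ∫ z in SS ε, f (-z.1, -z.2) / (z.1 * z.2) = ∫ z in SS ε, f z / (z.1 * z.2) := by
    have h2 := refl_fst (fun w : ℝ × ℝ => f (w.1, -w.2) / -(w.1 * w.2)) (SS ε) (SS_refl_fst ε)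
    simp only [neg_mul, neg_neg, div_neg] at h2
    rw [integral_neg] at h2
    rw [h2, hc, neg_neg]
  have hsplit : ∫ z in SS ε, hfun f z =
      ∫ z in SS ε, (f z / (z.1 * z.2) - f (-z.1, z.2) / (z.1 * z.2)
        - f (z.1, -z.2) / (z.1 * z.2) + f (-z.1, -z.2) / (z.1 * z.2)) / 4 := by
    refine setIntegral_congr_fun (SS_meas ε) (fun z hz => ?_)
    have h0 := hden_ne z hz
    simp only [hfun, Df]
    rw [div_sub_div_same, div_sub_div_same, ← add_div, div_div, mul_comm (z.1*z.2) 4]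
  have h1 : IntegrableOn (fun z : ℝ × ℝ =>
      f z / (z.1 * z.2) - f (-z.1, z.2) / (z.1 * z.2)) (SS ε) volume := hIa.sub hIb
  have h2 : IntegrableOn (fun z : ℝ × ℝ =>
      f z / (z.1 * z.2) - f (-z.1, z.2) / (z.1 * z.2) - f (z.1, -z.2) / (z.1 * z.2))
      (SS ε) volume := h1.sub hIc
  rw [hsplit, integral_div, integral_add h2 hId, integral_sub h1 hIc, integral_sub hIa hIb,
    hb, hc, hd]
  ring

private lemma mem_sqr {z : ℝ × ℝ} (hz : z ∈ sqr) : |z.1| ≤ 1 ∧ |z.2| ≤ 1 := by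
  obtain ⟨h1, h2⟩ := hz
  rw [Prod.le_def] at h1 h2
  exact ⟨abs_le.2 ⟨h1.1, h2.1⟩, abs_le.2 ⟨h1.2, h2.2⟩⟩

private lemma Df_bound (f : ℝ × ℝ → ℝ) (hf : ContDiff ℝ (⊤ : ℕ∞) f) :
    ∃ C : ℝ, 0 ≤ C ∧ ∀ z : ℝ × ℝ, |z.1| ≤ 1 → |z.2| ≤ 1 →
      |Df f z| ≤ 4 * C * (|z.1| * |z.2|) := by
  set g2 : ℝ × ℝ → ℝ := fun z => fderiv ℝ f z (0, 1) with hg2def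
  have hg2 : ContDiff ℝ (⊤ : ℕ∞) g2 := (hf.fderiv_right (by simp)).clm_apply contDiff_const
  have hcont : ContinuousOn (fun z => fderiv ℝ g2 z) (Metric.closedBall (0 : ℝ × ℝ) 2) :=
    ((hg2.fderiv_right (m := (⊤ : ℕ∞)) (by simp)).continuous).continuousOn
  obtain ⟨C, hC⟩ := (isCompact_closedBall (0 : ℝ × ℝ) 2).exists_bound_of_continuousOn hcont
  have hC0 : 0 ≤ C := le_trans (norm_nonneg _) (hC 0 (Metric.mem_closedBall_self (by norm_num)))
  refine ⟨C, hC0, ?_⟩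
  rintro ⟨x, y⟩ hx hy
  have hlip : ∀ z ∈ Metric.closedBall (0 : ℝ × ℝ) 2, ∀ w ∈ Metric.closedBall (0 : ℝ × ℝ) 2,
      ‖g2 z - g2 w‖ ≤ C * ‖z - w‖ := by
    intro z hz w hw
    exact Convex.norm_image_sub_le_of_norm_fderiv_le
      (fun u _ => (hg2.differentiable (by simp)).differentiableAt) hC
      (convex_closedBall _ _) hw hz
  set φ : ℝ → ℝ := fun t => f (x, t) - f (-x, t) with hφdef
  have hφ' : ∀ t : ℝ, HasDerivAt φ (g2 (x, t) - g2 (-x, t)) t := by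
    intro t
    have h1 : HasDerivAt (fun t : ℝ => ((x, t) : ℝ × ℝ)) ((0 : ℝ), (1 : ℝ)) t :=
      (hasDerivAt_const t x).prodMk (hasDerivAt_id t)
    have h2 : HasDerivAt (fun t : ℝ => ((-x, t) : ℝ × ℝ)) ((0 : ℝ), (1 : ℝ)) t :=
      (hasDerivAt_const t (-x)).prodMk (hasDerivAt_id t)
    have h3 : HasDerivAt (fun t : ℝ => f (x, t)) (g2 (x, t)) t :=
      ((hf.differentiable (by simp)) (x, t)).hasFDerivAt.comp_hasDerivAt t h1
    have h4 : HasDerivAt (fun t : ℝ => f (-x, t)) (g2 (-x, t)) t :=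
      ((hf.differentiable (by simp)) (-x, t)).hasFDerivAt.comp_hasDerivAt t h2
    exact h3.sub h4
  have hball : ∀ a b : ℝ, |a| ≤ 1 → |b| ≤ 1 →
      ((a, b) : ℝ × ℝ) ∈ Metric.closedBall (0 : ℝ × ℝ) 2 := by
    intro a b ha hb
    rw [Metric.mem_closedBall, dist_zero_right, Prod.norm_def]
    exact max_le (by simpa using ha.trans (by norm_num)) (by simpa using hb.trans (by norm_num))
  have hbound : ∀ t ∈ Set.Icc (-1 : ℝ) 1, ‖g2 (x, t) - g2 (-x, t)‖ ≤ C * (2 * |x|) := by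
    intro t ht
    have ht' : |t| ≤ 1 := abs_le.2 ⟨ht.1, ht.2⟩
    have := hlip (x, t) (hball x t hx ht') (-x, t) (hball (-x) t (by simpa using hx) ht')
    have hnorm : ‖((x, t) : ℝ × ℝ) - (-x, t)‖ = 2 * |x| := by
      have heq : ((x, t) : ℝ × ℝ) - (-x, t) = (2 * x, 0) := by
        ext <;> simp <;> ring
      rw [heq, Prod.norm_def]
      simp [Real.norm_eq_abs, abs_mul]
    rwa [hnorm] at this
  have hmvt : ‖φ y - φ (-y)‖ ≤ C * (2 * |x|) * ‖y - (-y)‖ := by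
    refine Convex.norm_image_sub_le_of_norm_hasDerivWithin_le
      (fun t ht => ((hφ' t).hasDerivWithinAt)) hbound (convex_Icc _ _) ?_ ?_
    · rw [Set.mem_Icc]
      exact ⟨by linarith [abs_le.1 hy], by linarith [abs_le.1 hy]⟩
    · rw [Set.mem_Icc]
      exact ⟨by linarith [abs_le.1 hy], by linarith [abs_le.1 hy]⟩
  have hDeq : Df f (x, y) = φ y - φ (-y) := by
    simp only [Df, hφdef]
    ring
  have hyn : ‖y - (-y)‖ = 2 * |y| := by
    rw [sub_neg_eq_add, Real.norm_eq_abs, show y + y = 2 * y by ring, abs_mul]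
    simp
  rw [hDeq]
  calc |φ y - φ (-y)| ≤ C * (2 * |x|) * (2 * |y|) := by rw [← hyn]; exact hmvt
    _ = 4 * C * (|x| * |y|) := by ring



/-- for `f` smooth on `[-1,1]²`, the principal value
`lim_{ε→0⁺} ∫_{|x|≥ε, |y|≥ε} f(x,y)/(xy)` over the square exists and is finite. -/
theorem stmt15 (f : ℝ × ℝ → ℝ) (hf : ContDiff ℝ (⊤ : ℕ∞) f) :
    ∃ L : ℝ, Filter.Tendsto
      (fun ε : ℝ =>
        ∫ z in {z : ℝ × ℝ | z ∈ Set.Icc ((-1, -1) : ℝ × ℝ) ((1, 1) : ℝ × ℝ) ∧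
            ε ≤ |z.1| ∧ ε ≤ |z.2|},
          f z / (z.1 * z.2))
      (nhdsWithin (0 : ℝ) (Set.Ioi 0)) (nhds L) := by
  obtain ⟨C, hC0, hCb⟩ := Df_bound f hf
  have hfc : Continuous f := hf.continuous
  have hDc : Continuous (Df f) :=
    ((hfc.sub (hfc.comp (continuous_fst.neg.prodMk continuous_snd))).sub
      (hfc.comp (continuous_fst.prodMk continuous_snd.neg))).add
      (hfc.comp (continuous_fst.neg.prodMk continuous_snd.neg))
  have hmeas : Measurable (hfun f) :=
    hDc.measurable.div (continuous_const.mul (continuous_fst.mul continuous_snd)).measurable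
  have hbound : ∀ z ∈ sqr, |hfun f z| ≤ C := by
    intro z hz
    obtain ⟨hx, hy⟩ := mem_sqr hz
    by_cases h1 : z.1 = 0
    · have hz0 : z = ((0 : ℝ), z.2) := by
        rw [← h1]
      have hD0 : Df f z = 0 := by
        rw [hz0]; simp only [Df, neg_zero]; ring
      simp [hfun, hD0, hC0]
    · by_cases h2 : z.2 = 0
      · have hz0 : z = (z.1, (0 : ℝ)) := by
          rw [← h2]
        have hD0 : Df f z = 0 := by
          rw [hz0]; simp only [Df, neg_zero]; ring
        simp [hfun, hD0, hC0]
      · have hpos : 0 < 4 * (|z.1| * |z.2|) := by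
          have := abs_pos.2 h1
          have := abs_pos.2 h2
          positivity
        have habs : |4 * (z.1 * z.2)| = 4 * (|z.1| * |z.2|) := by
          rw [abs_mul, abs_mul]
          norm_num
        rw [hfun, abs_div, habs, div_le_iff₀ hpos]
        calc |Df f z| ≤ 4 * C * (|z.1| * |z.2|) := hCb z hx hy
          _ = C * (4 * (|z.1| * |z.2|)) := by ring
  have hQmeas : MeasurableSet sqr := measurableSet_Icc
  refine ⟨∫ z, Set.indicator sqr (hfun f) z, ?_⟩
  have hDCT : Filter.Tendsto (fun ε : ℝ => ∫ z, Set.indicator (SS ε) (hfun f) z)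
      (nhdsWithin (0 : ℝ) (Set.Ioi 0)) (nhds (∫ z, Set.indicator sqr (hfun f) z)) := by
    refine tendsto_integral_filter_of_dominated_convergence
      (Set.indicator sqr (fun _ => C)) ?_ ?_ ?_ ?_
    · exact Filter.Eventually.of_forall fun ε =>
        (hmeas.indicator (SS_meas ε)).aestronglyMeasurable
    · refine Filter.Eventually.of_forall fun ε => ae_of_all _ fun z => ?_
      by_cases hzS : z ∈ SS ε
      · rw [Set.indicator_of_mem hzS, Set.indicator_of_mem hzS.1, Real.norm_eq_abs]
        exact hbound z hzS.1
      · rw [Set.indicator_of_notMem hzS, norm_zero]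
        exact Set.indicator_nonneg (fun _ _ => hC0) z
    · rw [integrable_indicator_iff hQmeas]
      exact integrableOn_const isCompact_Icc.measure_lt_top.ne
    · have hnull : volume {z : ℝ × ℝ | z.1 = 0 ∨ z.2 = 0} = 0 := by
        have hsub : {z : ℝ × ℝ | z.1 = 0 ∨ z.2 = 0} ⊆
            (({0} : Set ℝ) ×ˢ (Set.univ : Set ℝ)) ∪ ((Set.univ : Set ℝ) ×ˢ ({0} : Set ℝ)) := by
          rintro z (h | h)
          · exact Or.inl ⟨h, Set.mem_univ _⟩
          · exact Or.inr ⟨Set.mem_univ _, h⟩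
        refine measure_mono_null hsub ?_
        refine le_antisymm (le_trans (measure_union_le _ _) ?_) zero_le
        rw [Measure.volume_eq_prod, Measure.prod_prod, Measure.prod_prod]
        simp
      have hae : ∀ᵐ z : ℝ × ℝ, z.1 ≠ 0 ∧ z.2 ≠ 0 := by
        rw [MeasureTheory.ae_iff]
        have hset : {z : ℝ × ℝ | ¬(z.1 ≠ 0 ∧ z.2 ≠ 0)} = {z : ℝ × ℝ | z.1 = 0 ∨ z.2 = 0} := by
          ext z; simp only [Set.mem_setOf_eq, not_and_or, not_not, ne_eq]
        rw [hset]; exact hnull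
      · filter_upwards [hae] with z hz
        obtain ⟨hz1, hz2⟩ := hz
        by_cases hzQ : z ∈ sqr
        · have hδ : 0 < min |z.1| |z.2| := lt_min (abs_pos.2 hz1) (abs_pos.2 hz2)
          have hev : ∀ᶠ ε in nhdsWithin (0 : ℝ) (Set.Ioi 0),
              Set.indicator (SS ε) (hfun f) z = Set.indicator sqr (hfun f) z := by
            filter_upwards [Ioo_mem_nhdsGT_of_mem
              (Set.mem_Ico.2 ⟨le_refl (0 : ℝ), hδ⟩)] with ε hε
            have hzS : z ∈ SS ε :=
              ⟨hzQ, le_trans hε.2.le (min_le_left _ _), le_trans hε.2.le (min_le_right _ _)⟩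
            rw [Set.indicator_of_mem hzS, Set.indicator_of_mem hzQ]
          exact tendsto_const_nhds.congr' (hev.mono fun ε h => h.symm)
        · have hall : ∀ ε : ℝ, Set.indicator (SS ε) (hfun f) z = 0 := fun ε =>
            Set.indicator_of_notMem (fun hzS => hzQ hzS.1) _
          rw [Set.indicator_of_notMem hzQ]
          exact tendsto_const_nhds.congr fun ε => (hall ε).symm
  refine hDCT.congr' ?_
  filter_upwards [self_mem_nhdsWithin] with ε (hε : ε ∈ Set.Ioi (0 : ℝ))
  rw [integral_indicator (SS_meas ε), key_eq f hf hε]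
  rfl
end
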